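/- Let 0 < q < 1, let N ∈ ℕ and let a, b, c, d ∈ ℂ satisfy a·b·c·d·q^N = 1 and c·d·q^j ≠ 1 for 0 ≤ j ≤ N; set θ = 1/√(1−q). Let φ : ℕ×ℕ → ℂ satisfy: φ(m,n) = 0 for all m + n ≤ N; φ(m,n) = (−cd)^m·q^{m(m−1)/2}/(θ^{N+1}·(cd;q)_{N+1}) for all m + n = N+1; and the recursions (SolA) and (SolB) at every pair (m,n) with m + n ≥ N+1. For n ≥ 0 and t ∈ ℂ define F_n(t) = Σ_{k=0}^{n+N} binom_q(n+N,k)·φ(k,n+N−k)·t^k. Then: (i) F_1(t) = (t·cd;q)_{N+1}/(θ^{N+1}·(cd;q)_{N+1}) for all t ∈ ℂ; and (ii) for every n ≥ 1 and t ∈ ℂ: (1 − q^n)·F_{n+1}(t) = θ·[(a+b)(1 − t·cd)·F_n(q·t) + (c+d)(t − q^{n+N}·ab)·F_n(t)] − θ²·(1 − q^{n+N})·[ab·(1 − t·cd)·F_{n−1}(q·t) + t·cd·(t − ab·q^{n+N})·F_{n−1}(t)]. -/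

import Mathlib

noncomputable section

open scoped BigOperators

/-- The q-integer `[k]_q = 1 + q + ⋯ + q^{k-1}` (with `[0]_q = 0`). -/
def qIntC (q : ℂ) (k : ℕ) : ℂ := ∑ i ∈ Finset.range k, q ^ i

/-- The Gaussian (q-)binomial coefficient, characterized by
`qBinom q n 0 = 1`, `qBinom q 0 (k+1) = 0` and the Pascal-type rule
`qBinom q (n+1) (k+1) = q^(k+1) * qBinom q n (k+1) + qBinom q n k`. -/
def qBinom (q : ℂ) : ℕ → ℕ → ℂ
  | _, 0 => 1
  | 0, _ + 1 => 0
  | n + 1, k + 1 => q ^ (k + 1) * qBinom q n (k + 1) + qBinom q n k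

/-- Recursion (SolA) at `(m,n)`; terms that would carry a negative index are written
with truncated subtraction, their coefficients `[0]_q = 0` vanishing. -/
def SolA (q θ a b c d : ℂ) (φ : ℕ → ℕ → ℂ) (m n : ℕ) : Prop :=
  (1 - a * b * c * d * q ^ (m + n)) * φ (m + 1) n =
    θ * (c + d - c * d * (a + b) * q ^ m) * φ m n
      - c * d * qIntC q m * φ (m - 1) n
      + a * b * c * d * q ^ m * qIntC q n * φ m (n - 1)

/-- Recursion (SolB) at `(m,n)`; terms that would carry a negative index are written
with truncated subtraction, their coefficients `[0]_q = 0` vanishing. -/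
def SolB (q θ a b c d : ℂ) (φ : ℕ → ℕ → ℂ) (m n : ℕ) : Prop :=
  (1 - a * b * c * d * q ^ (m + n)) * φ m (n + 1) =
    θ * (a + b - a * b * (c + d) * q ^ n) * φ m n
      - a * b * qIntC q n * φ m (n - 1)
      + a * b * c * d * q ^ n * qIntC q m * φ (m - 1) n

/-- `Gfun q φ ℓ t = Σ_{k=0}^{ℓ} binom_q(ℓ,k)·φ(k,ℓ-k)·t^k`. -/
def Gfun (q : ℂ) (φ : ℕ → ℕ → ℂ) (ℓ : ℕ) (t : ℂ) : ℂ :=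
  ∑ k ∈ Finset.range (ℓ + 1), qBinom q ℓ k * φ k (ℓ - k) * t ^ k

/-- The q-Pochhammer symbol `(a;q)_n = ∏_{j=0}^{n-1} (1 - a q^j)`. -/
def qPoch (q a : ℂ) (n : ℕ) : ℂ := ∏ j ∈ Finset.range n, (1 - a * q ^ j)

/-! The generating function `Gfun q φ ℓ` only sees `φ` on the antidiagonal `i + j = ℓ`. The
Pascal rule for the Gaussian binomials splits `Gfun q φ (ℓ+1)` into two generating functions of
level `ℓ`, one for each way of leaving the antidiagonal; (SolA) and (SolB) express these through
`φ` on the two antidiagonals below, and the absorption identities `[k]·binom(ℓ+1,k) =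
[ℓ+1]·binom(ℓ,k-1)` turn the resulting sums back into generating functions. On the lowest
nonzero antidiagonal, part (i) is Cauchy's q-binomial theorem. In part (ii) the normalisations
`abcd·q^N = 1` and `θ² = 1/(1-q)` turn the coefficients `1 - abcd·q^(n+N)` and `[n+N]` of the
general recurrence into `1 - q^n` and `θ²·(1 - q^(n+N))`. -/

section QBinom

variable (q : ℂ)

@[simp]
lemma qIntC_zero : qIntC q 0 = 0 := rfl

@[simp]
lemma qIntC_one : qIntC q 1 = 1 := by
  simp [qIntC]

lemma qIntC_mul_sub_one (k : ℕ) : qIntC q k * (q - 1) = q ^ k - 1 :=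
  geom_sum_mul q k

lemma qIntC_add (m n : ℕ) : qIntC q (m + n) = qIntC q m + q ^ m * qIntC q n := by
  simp only [qIntC, Finset.sum_range_add, Finset.mul_sum, pow_add]

@[simp]
lemma qBinom_zero_right (n : ℕ) : qBinom q n 0 = 1 := by
  cases n <;> rfl

lemma qBinom_succ_succ (n k : ℕ) :
    qBinom q (n + 1) (k + 1) = q ^ (k + 1) * qBinom q n (k + 1) + qBinom q n k := rfl

lemma qBinom_eq_zero_of_lt {n k : ℕ} (h : n < k) : qBinom q n k = 0 := by
  induction n generalizing k with
  | zero => obtain ⟨k, rfl⟩ := Nat.exists_eq_add_one_of_ne_zero h.ne'; rfl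
  | succ n ih =>
    obtain ⟨k, rfl⟩ := Nat.exists_eq_add_one_of_ne_zero (by omega : k ≠ 0)
    rw [qBinom_succ_succ, ih (by omega), ih (by omega), mul_zero, add_zero]

lemma qIntC_succ_mul_qBinom_succ (n k : ℕ) :
    qIntC q (k + 1) * qBinom q n (k + 1) = qIntC q (n - k) * qBinom q n k := by
  induction n generalizing k with
  | zero => simp [qBinom_eq_zero_of_lt q (Nat.succ_pos k)]
  | succ n ih =>
    cases k with
    | zero =>
      have h1 := qIntC_add q 1 n
      have ih0 := ih 0
      rw [add_comm 1 n, qIntC_one] at h1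
      simp only [qBinom_succ_succ, qBinom_zero_right, Nat.sub_zero, zero_add, qIntC_one] at ih0 ⊢
      linear_combination q * ih0 - h1
    | succ j =>
      rw [qBinom_succ_succ, qBinom_succ_succ, Nat.add_sub_add_right]
      rcases lt_or_ge j n with hj | hj
      · obtain ⟨r, rfl⟩ : ∃ r, n = j + 1 + r := ⟨n - (j + 1), by omega⟩
        have h1 := qIntC_add q (j + 2) r
        have h2 := qIntC_add q (j + 1) (r + 1)
        rw [show j + 1 + (r + 1) = j + 2 + r by omega] at h2
        have ih1 := ih (j + 1)
        have ih0 := ih j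
        rw [show j + 1 + r - (j + 1) = r by omega] at ih1
        rw [show j + 1 + r - j = r + 1 by omega] at ih0 ⊢
        linear_combination q ^ (j + 2) * ih1 + ih0 + qBinom q (j + 1 + r) (j + 1) * (h2 - h1)
      · simp [qBinom_eq_zero_of_lt q (show n < j + 1 by omega),
          qBinom_eq_zero_of_lt q (show n < j + 1 + 1 by omega), Nat.sub_eq_zero_of_le hj]

lemma qBinom_succ_succ_mul_qIntC (n k : ℕ) :
    qBinom q (n + 1) (k + 1) * qIntC q (k + 1) = qIntC q (n + 1) * qBinom q n k := by
  rcases le_or_gt k n with hk | hk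
  · obtain ⟨r, rfl⟩ : ∃ r, n = k + r := ⟨n - k, by omega⟩
    have hR := qIntC_succ_mul_qBinom_succ q (k + r) k
    have hadd := qIntC_add q (k + 1) r
    rw [Nat.add_sub_cancel_left] at hR
    rw [show k + 1 + r = k + r + 1 by omega] at hadd
    rw [qBinom_succ_succ]
    linear_combination q ^ (k + 1) * hR - qBinom q (k + r) k * hadd
  · rw [qBinom_eq_zero_of_lt q (by omega : n + 1 < k + 1), qBinom_eq_zero_of_lt q hk]
    ring

lemma qBinom_succ_mul_qIntC_sub (n k : ℕ) :
    qBinom q (n + 1) k * qIntC q (n + 1 - k) = qIntC q (n + 1) * qBinom q n k := by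
  cases k with
  | zero => simp
  | succ j =>
    rw [Nat.add_sub_add_right]
    rcases lt_or_ge j n with hj | hj
    · obtain ⟨r, rfl⟩ : ∃ r, n = j + 1 + r := ⟨n - (j + 1), by omega⟩
      have hR := qIntC_succ_mul_qBinom_succ q (j + 1 + r) j
      have hadd := qIntC_add q (j + 1) (r + 1)
      rw [show j + 1 + r - j = r + 1 by omega] at hR ⊢
      rw [show j + 1 + (r + 1) = j + 1 + r + 1 by omega] at hadd
      rw [qBinom_succ_succ]
      linear_combination -hR - qBinom q (j + 1 + r) (j + 1) * hadd
    · simp [qBinom_eq_zero_of_lt q (show n < j + 1 by omega), Nat.sub_eq_zero_of_le hj]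

end QBinom

section Gfun

variable (q : ℂ) (φ ψ : ℕ → ℕ → ℂ) (ℓ : ℕ)

lemma Gfun_congr (h : ∀ i j, i + j = ℓ → φ i j = ψ i j) : Gfun q φ ℓ = Gfun q ψ ℓ := by
  funext t
  refine Finset.sum_congr rfl fun k hk => ?_
  rw [h k (ℓ - k) (by simp at hk; omega)]

lemma Gfun_add (t : ℂ) :
    Gfun q (fun i j => φ i j + ψ i j) ℓ t = Gfun q φ ℓ t + Gfun q ψ ℓ t := by
  simp only [Gfun, ← Finset.sum_add_distrib]
  exact Finset.sum_congr rfl fun _ _ => by ring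

lemma Gfun_sub (t : ℂ) :
    Gfun q (fun i j => φ i j - ψ i j) ℓ t = Gfun q φ ℓ t - Gfun q ψ ℓ t := by
  simp only [Gfun, ← Finset.sum_sub_distrib]
  exact Finset.sum_congr rfl fun _ _ => by ring

lemma Gfun_const_mul (c t : ℂ) : Gfun q (fun i j => c * φ i j) ℓ t = c * Gfun q φ ℓ t := by
  simp only [Gfun, Finset.mul_sum]
  exact Finset.sum_congr rfl fun _ _ => by ring

lemma Gfun_pow_fst_mul (s t : ℂ) :
    Gfun q (fun i j => s ^ i * φ i j) ℓ t = Gfun q φ ℓ (s * t) := by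
  simp only [Gfun, mul_pow]
  exact Finset.sum_congr rfl fun _ _ => by ring

lemma Gfun_pow_snd_mul (s t : ℂ) :
    Gfun q (fun i j => s ^ j * φ i j) ℓ (s * t) = s ^ ℓ * Gfun q φ ℓ t := by
  simp only [Gfun, Finset.mul_sum]
  refine Finset.sum_congr rfl fun k hk => ?_
  rw [mul_pow, ← pow_sub_mul_pow s (by simp at hk; omega : k ≤ ℓ)]
  ring

lemma Gfun_qIntC_fst_mul (t : ℂ) :
    Gfun q (fun i j => qIntC q i * φ (i - 1) j) (ℓ + 1) t = qIntC q (ℓ + 1) * t * Gfun q φ ℓ t := by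
  rw [Gfun, Finset.sum_range_succ', Gfun, Finset.mul_sum]
  simp only [qIntC_zero, mul_zero, zero_mul, add_zero]
  refine Finset.sum_congr rfl fun k _ => ?_
  rw [Nat.add_sub_cancel, Nat.add_sub_add_right, pow_succ,
    ← mul_assoc (qBinom q (ℓ + 1) (k + 1)), qBinom_succ_succ_mul_qIntC]
  ring

lemma Gfun_qIntC_snd_mul (t : ℂ) :
    Gfun q (fun i j => qIntC q j * φ i (j - 1)) (ℓ + 1) t = qIntC q (ℓ + 1) * Gfun q φ ℓ t := by
  rw [Gfun, Finset.sum_range_succ, Nat.sub_self, Gfun, Finset.mul_sum]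
  simp only [qIntC_zero, zero_mul, mul_zero, add_zero]
  refine Finset.sum_congr rfl fun k hk => ?_
  rw [show ℓ + 1 - k - 1 = ℓ - k by omega, ← mul_assoc (qBinom q (ℓ + 1) k),
    qBinom_succ_mul_qIntC_sub]
  ring

/-- The Pascal rule `binom(ℓ+1,k) = q^k binom(ℓ,k) + binom(ℓ,k-1)` for generating functions. -/
lemma Gfun_succ (t : ℂ) :
    Gfun q φ (ℓ + 1) t =
      Gfun q (fun i j => φ i (j + 1)) ℓ (q * t) + t * Gfun q (fun i j => φ (i + 1) j) ℓ t := by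
  have hlow : Gfun q (fun i j => φ i (j + 1)) ℓ (q * t) =
      ∑ k ∈ Finset.range (ℓ + 1),
        q ^ (k + 1) * qBinom q ℓ (k + 1) * φ (k + 1) (ℓ - k) * t ^ (k + 1) + φ 0 (ℓ + 1) := by
    rw [Finset.sum_range_succ, qBinom_eq_zero_of_lt q (Nat.lt_succ_self ℓ), Gfun,
      Finset.sum_range_succ']
    simp only [qBinom_zero_right, Nat.sub_zero, pow_zero, mul_one, one_mul, mul_zero, zero_mul,
      add_zero]
    congr 1
    refine Finset.sum_congr rfl fun k hk => ?_
    rw [show ℓ - (k + 1) + 1 = ℓ - k by simp at hk; omega, mul_pow]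
    ring
  rw [hlow, Gfun, Gfun, Finset.sum_range_succ', Finset.mul_sum]
  simp only [qBinom_succ_succ, Nat.add_sub_add_right, qBinom_zero_right, Nat.sub_zero, pow_zero,
    mul_one, one_mul, add_mul, Finset.sum_add_distrib]
  rw [add_right_comm]
  congr 1
  refine Finset.sum_congr rfl fun k _ => ?_
  ring

end Gfun

lemma qPoch_succ (q x : ℂ) (n : ℕ) : qPoch q x (n + 1) = (1 - x) * qPoch q (q * x) n := by
  simp only [qPoch, Finset.prod_range_succ', pow_succ, pow_zero, mul_one]
  rw [mul_comm]
  congr 1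
  exact Finset.prod_congr rfl fun _ _ => by ring

/-- Cauchy's q-binomial theorem. -/
lemma Gfun_qBinomial (q x : ℂ) (n : ℕ) :
    Gfun q (fun i _ => (-1) ^ i * q ^ (i * (i - 1) / 2)) n x = qPoch q x n := by
  induction n generalizing x with
  | zero => simp [Gfun, qPoch]
  | succ n ih =>
    have hshift : (fun i (_ : ℕ) => (-1 : ℂ) ^ (i + 1) * q ^ ((i + 1) * (i + 1 - 1) / 2)) =
        fun i j => -1 * (q ^ i * ((fun i (_ : ℕ) => (-1) ^ i * q ^ (i * (i - 1) / 2)) i j)) := by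
      funext i _
      rw [Nat.triangle_succ, pow_add, pow_succ]
      ring
    rw [Gfun_succ, hshift, Gfun_const_mul, Gfun_pow_fst_mul q _ n q x, ih, qPoch_succ]
    ring

lemma Gfun_eq_qPoch_div (q x D : ℂ) (φ : ℕ → ℕ → ℂ) (ℓ : ℕ)
    (hφ : ∀ m n : ℕ, m + n = ℓ → φ m n = (-x) ^ m * q ^ (m * (m - 1) / 2) / D) (t : ℂ) :
    Gfun q φ ℓ t = qPoch q (t * x) ℓ / D := by
  have hφ' : ∀ m n : ℕ, m + n = ℓ →
      φ m n = D⁻¹ * (x ^ m * ((-1) ^ m * q ^ (m * (m - 1) / 2))) := by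
    intro m n h
    rw [hφ m n h, neg_eq_neg_one_mul, mul_pow]
    ring
  rw [Gfun_congr q _ _ ℓ hφ', Gfun_const_mul, Gfun_pow_fst_mul, Gfun_qBinomial, mul_comm x t,
    inv_mul_eq_div]

lemma Gfun_recurrence (q θ a b c d : ℂ) (φ : ℕ → ℕ → ℂ) (ℓ : ℕ)
    (hA : ∀ i j : ℕ, i + j = ℓ + 1 → SolA q θ a b c d φ i j)
    (hB : ∀ i j : ℕ, i + j = ℓ + 1 → SolB q θ a b c d φ i j) (t : ℂ) :
    (1 - a * b * c * d * q ^ (ℓ + 1)) * Gfun q φ (ℓ + 2) t =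
      θ * ((a + b) * (1 - t * c * d) * Gfun q φ (ℓ + 1) (q * t)
            + (c + d) * (t - q ^ (ℓ + 1) * a * b) * Gfun q φ (ℓ + 1) t)
        - qIntC q (ℓ + 1) *
            (a * b * (1 - t * c * d) * Gfun q φ ℓ (q * t)
              + t * c * d * (t - a * b * q ^ (ℓ + 1)) * Gfun q φ ℓ t) := by
  have hB' : (1 - a * b * c * d * q ^ (ℓ + 1)) * Gfun q (fun i j => φ i (j + 1)) (ℓ + 1) (q * t) =
      θ * (a + b) * Gfun q φ (ℓ + 1) (q * t) - θ * a * b * (c + d) * (q ^ (ℓ + 1) * Gfun q φ (ℓ + 1) t)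
        - a * b * (qIntC q (ℓ + 1) * Gfun q φ ℓ (q * t))
        + a * b * c * d * (q ^ (ℓ + 1) * (qIntC q (ℓ + 1) * t * Gfun q φ ℓ t)) := by
    rw [← Gfun_const_mul, Gfun_congr q _ (fun i j =>
      θ * (a + b) * φ i j - θ * a * b * (c + d) * (q ^ j * φ i j)
        - a * b * (qIntC q j * φ i (j - 1))
        + a * b * c * d * (q ^ j * (qIntC q i * φ (i - 1) j))) _ fun i j h => ?_]
    · simp only [Gfun_add, Gfun_sub, Gfun_const_mul, Gfun_pow_snd_mul, Gfun_qIntC_fst_mul,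
        Gfun_qIntC_snd_mul]
    · have hij := hB i j h
      rw [SolB, h] at hij
      linear_combination hij
  have hA' : (1 - a * b * c * d * q ^ (ℓ + 1)) * Gfun q (fun i j => φ (i + 1) j) (ℓ + 1) t =
      θ * (c + d) * Gfun q φ (ℓ + 1) t - θ * c * d * (a + b) * Gfun q φ (ℓ + 1) (q * t)
        - c * d * (qIntC q (ℓ + 1) * t * Gfun q φ ℓ t)
        + a * b * c * d * (qIntC q (ℓ + 1) * Gfun q φ ℓ (q * t)) := by
    rw [← Gfun_const_mul, Gfun_congr q _ (fun i j =>
      θ * (c + d) * φ i j - θ * c * d * (a + b) * (q ^ i * φ i j)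
        - c * d * (qIntC q i * φ (i - 1) j)
        + a * b * c * d * (q ^ i * (qIntC q j * φ i (j - 1)))) _ fun i j h => ?_]
    · simp only [Gfun_add, Gfun_sub, Gfun_const_mul, Gfun_pow_fst_mul, Gfun_qIntC_fst_mul,
        Gfun_qIntC_snd_mul]
    · have hij := hA i j h
      rw [SolA, h] at hij
      linear_combination hij
  rw [Gfun_succ]
  linear_combination hB' + t * hA'
theorem stmt15_general (q : ℝ) (hq1 : q < 1) (N : ℕ)
    (a b c d : ℂ)
    (hsing : a * b * c * d * (q : ℂ) ^ N = 1)
    (θ : ℂ) (hθ : θ = ((1 / Real.sqrt (1 - q) : ℝ) : ℂ))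
    (φ : ℕ → ℕ → ℂ)
    (h1 : ∀ m n : ℕ, m + n = N + 1 →
      φ m n = (-(c * d)) ^ m * (q : ℂ) ^ (m * (m - 1) / 2) /
        (θ ^ (N + 1) * qPoch (q : ℂ) (c * d) (N + 1)))
    (hA : ∀ m n : ℕ, N + 1 ≤ m + n → SolA (q : ℂ) θ a b c d φ m n)
    (hB : ∀ m n : ℕ, N + 1 ≤ m + n → SolB (q : ℂ) θ a b c d φ m n) :
    (∀ t : ℂ,
      Gfun (q : ℂ) φ (1 + N) t =
        qPoch (q : ℂ) (t * c * d) (N + 1) / (θ ^ (N + 1) * qPoch (q : ℂ) (c * d) (N + 1))) ∧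
    (∀ n : ℕ, 1 ≤ n → ∀ t : ℂ,
      (1 - (q : ℂ) ^ n) * Gfun (q : ℂ) φ (n + 1 + N) t =
        θ * ((a + b) * (1 - t * c * d) * Gfun (q : ℂ) φ (n + N) ((q : ℂ) * t)
              + (c + d) * (t - (q : ℂ) ^ (n + N) * a * b) * Gfun (q : ℂ) φ (n + N) t)
          - θ ^ 2 * (1 - (q : ℂ) ^ (n + N)) *
              (a * b * (1 - t * c * d) * Gfun (q : ℂ) φ (n - 1 + N) ((q : ℂ) * t)
                + t * c * d * (t - a * b * (q : ℂ) ^ (n + N)) *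
                    Gfun (q : ℂ) φ (n - 1 + N) t)) := by
  refine ⟨fun t => ?_, fun n hn t => ?_⟩
  · rw [add_comm 1 N, Gfun_eq_qPoch_div _ _ _ φ _ h1, mul_assoc t]
  obtain ⟨ℓ, hℓ⟩ : ∃ ℓ, n + N = ℓ + 1 := ⟨n + N - 1, by omega⟩
  have hθ2 : θ ^ 2 * (1 - (q : ℂ)) = 1 := by
    have hpos : 0 < 1 - q := by linarith
    rw [hθ]
    exact_mod_cast show (1 / √(1 - q)) ^ 2 * (1 - q) = 1 by
      rw [div_pow, one_pow, Real.sq_sqrt hpos.le, one_div_mul_cancel hpos.ne']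
  have hqInt : qIntC (q : ℂ) (ℓ + 1) = θ ^ 2 * (1 - (q : ℂ) ^ (ℓ + 1)) := by
    linear_combination (-qIntC (q : ℂ) (ℓ + 1)) * hθ2 - θ ^ 2 * qIntC_mul_sub_one (q : ℂ) (ℓ + 1)
  have hqn : a * b * c * d * (q : ℂ) ^ (ℓ + 1) = (q : ℂ) ^ n := by
    rw [← hℓ, add_comm n N, pow_add, ← mul_assoc, hsing, one_mul]
  have hrec := Gfun_recurrence (q : ℂ) θ a b c d φ ℓ (fun i j h => hA i j (by omega))
    (fun i j h => hB i j (by omega)) t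
  rw [hqn, hqInt, ← hℓ] at hrec
  rwa [show n + 1 + N = ℓ + 2 by omega, show n - 1 + N = ℓ by omega]

theorem stmt15 (q : ℝ) (hq0 : 0 < q) (hq1 : q < 1) (N : ℕ)
    (a b c d : ℂ)
    (hsing : a * b * c * d * (q : ℂ) ^ N = 1)
    (hcd : ∀ j : ℕ, j ≤ N → c * d * (q : ℂ) ^ j ≠ 1)
    (θ : ℂ) (hθ : θ = ((1 / Real.sqrt (1 - q) : ℝ) : ℂ))
    (φ : ℕ → ℕ → ℂ)
    (h0 : ∀ m n : ℕ, m + n ≤ N → φ m n = 0)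
    (h1 : ∀ m n : ℕ, m + n = N + 1 →
      φ m n = (-(c * d)) ^ m * (q : ℂ) ^ (m * (m - 1) / 2) /
        (θ ^ (N + 1) * qPoch (q : ℂ) (c * d) (N + 1)))
    (hA : ∀ m n : ℕ, N + 1 ≤ m + n → SolA (q : ℂ) θ a b c d φ m n)
    (hB : ∀ m n : ℕ, N + 1 ≤ m + n → SolB (q : ℂ) θ a b c d φ m n) :
    (∀ t : ℂ,
      Gfun (q : ℂ) φ (1 + N) t =
        qPoch (q : ℂ) (t * c * d) (N + 1) / (θ ^ (N + 1) * qPoch (q : ℂ) (c * d) (N + 1))) ∧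
    (∀ n : ℕ, 1 ≤ n → ∀ t : ℂ,
      (1 - (q : ℂ) ^ n) * Gfun (q : ℂ) φ (n + 1 + N) t =
        θ * ((a + b) * (1 - t * c * d) * Gfun (q : ℂ) φ (n + N) ((q : ℂ) * t)
              + (c + d) * (t - (q : ℂ) ^ (n + N) * a * b) * Gfun (q : ℂ) φ (n + N) t)
          - θ ^ 2 * (1 - (q : ℂ) ^ (n + N)) *
              (a * b * (1 - t * c * d) * Gfun (q : ℂ) φ (n - 1 + N) ((q : ℂ) * t)
                + t * c * d * (t - a * b * (q : ℂ) ^ (n + N)) *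
                    Gfun (q : ℂ) φ (n - 1 + N) t)) :=
  stmt15_general q hq1 N a b c d hsing θ hθ φ h1 hA hB
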